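/- arXiv:2502.19744 — 5 statements merged into one kernel-verified Lean document; each statement's English description precedes it below -/
import Mathlib

section
/- Let X be a non-redundant allocation. Then X admits a blocking pair if and only if there exist a doctor d and a hospital h such that Δ_h(X_h, d) = 1 and d strictly prefers h to X(d). -/
open Finset

/-- A matroid rank function on subsets of a finite ground set. -/
def IsMRF {α : Type*} [DecidableEq α] (v : Finset α → ℤ) : Prop :=
  v ∅ = 0 ∧
  (∀ (S : Finset α) (d : α), d ∉ S →
    v (insert d S) - v S = 0 ∨ v (insert d S) - v S = 1) ∧
  (∀ (S T : Finset α) (d : α), S ⊆ T → d ∉ T →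
    v (insert d T) - v T ≤ v (insert d S) - v S)

/-- The bundle of doctors assigned to hospital `h` under allocation `X`. -/
def bundle {n m : ℕ} (X : Fin m → Option (Fin n)) (h : Fin n) : Finset (Fin m) :=
  Finset.univ.filter (fun d => X d = some h)

/-- An allocation is non-redundant if every hospital's bundle is independent. -/
def NonRedundant {n m : ℕ} (v : Fin n → Finset (Fin m) → ℤ)
    (X : Fin m → Option (Fin n)) : Prop :=
  ∀ h, v h (bundle X h) = (bundle X h).card

/-- Hospital utilitarian welfare. -/
def USW {n m : ℕ} (v : Fin n → Finset (Fin m) → ℤ) (X : Fin m → Option (Fin n)) : ℤ :=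
  ∑ h, v h (bundle X h)

/-- Doctor `d` strictly prefers the first outcome to the second; every hospital is
strictly preferred to being unallocated (`none`). -/
def OptStrictPref {n m : ℕ} (P : Fin m → Fin n → Fin n → Prop) (d : Fin m) :
    Option (Fin n) → Option (Fin n) → Prop
  | some h, some h' => P d h h'
  | some _, none => True
  | none, _ => False

/-- `(h, S)` is a blocking pair for `X`. -/
def IsBlockingPair {n m : ℕ} (v : Fin n → Finset (Fin m) → ℤ)
    (P : Fin m → Fin n → Fin n → Prop) (X : Fin m → Option (Fin n))
    (h : Fin n) (S : Finset (Fin m)) : Prop :=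
  v h S = S.card ∧ v h (bundle X h) < v h S ∧
    ∀ d ∈ S, X d = some h ∨ OptStrictPref P d (some h) (X d)

/-- An allocation is stable if it is non-redundant and admits no blocking pair. -/
def Stable {n m : ℕ} (v : Fin n → Finset (Fin m) → ℤ)
    (P : Fin m → Fin n → Fin n → Prop) (X : Fin m → Option (Fin n)) : Prop :=
  NonRedundant v X ∧ ¬ ∃ h S, IsBlockingPair v P X h S

/-!
If `(h, S)` blocks `X`, then `v_h(S) > v_h(X_h)`, so by submodularity some `d ∈ S \ X_h` has
`Δ_h(X_h, d) = 1`; this `d` is not in `X_h`, hence strictly prefers `h`. Conversely, such a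
`d` makes `X_h ∪ {d}` a blocking set, independent because `X_h` is.
-/

namespace IsMRF

variable {α : Type*} [DecidableEq α] {v : Finset α → ℤ}

theorem le_insert (hv : IsMRF v) (S : Finset α) (d : α) : v S ≤ v (insert d S) := by
  by_cases hd : d ∈ S
  · rw [insert_eq_of_mem hd]
  · rcases hv.2.1 S d hd with h | h <;> linarith

theorem mono (hv : IsMRF v) {S T : Finset α} (hST : S ⊆ T) : v S ≤ v T := by
  suffices ∀ U, v S ≤ v (S ∪ U) by simpa [union_eq_right.mpr hST] using this T
  intro U
  induction U using Finset.induction_on with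
  | empty => simp
  | insert a U _ ih => exact ih.trans (by rw [union_insert]; exact hv.le_insert _ a)

theorem union_le_of_forall_insert_le (hv : IsMRF v) {S U : Finset α}
    (hU : ∀ d ∈ U, v (insert d S) ≤ v S) : v (S ∪ U) ≤ v S := by
  induction U using Finset.induction_on with
  | empty => simp
  | insert a U _ ih =>
    have ih := ih fun d hd => hU d (mem_insert_of_mem hd)
    rw [union_insert]
    by_cases ha : a ∈ S ∪ U
    · rwa [insert_eq_of_mem ha]
    · have hsub := hv.2.2 S (S ∪ U) a subset_union_left ha
      have ha := hU a (mem_insert_self a U)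
      linarith

theorem exists_mem_sdiff_insert_sub_eq_one (hv : IsMRF v) {S T : Finset α} (hST : v S < v T) :
    ∃ d ∈ T \ S, v (insert d S) - v S = 1 := by
  by_contra! hne
  have huseless : ∀ d ∈ T \ S, v (insert d S) ≤ v S := fun d hd =>
    (hv.2.1 S d (mem_sdiff.mp hd).2).elim (fun h => by linarith) (fun h => absurd h (hne d hd))
  have := calc
    v T ≤ v (S ∪ T) := hv.mono subset_union_right
    _ = v (S ∪ T \ S) := by rw [union_sdiff_self_eq_union]
    _ ≤ v S := hv.union_le_of_forall_insert_le huseless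
  linarith

end IsMRF

section Allocation

variable {n m : ℕ} {v : Fin n → Finset (Fin m) → ℤ} {P : Fin m → Fin n → Fin n → Prop}
  {X : Fin m → Option (Fin n)} {h : Fin n} {d : Fin m}

@[simp]
theorem mem_bundle : d ∈ bundle X h ↔ X d = some h := by
  simp [bundle]

theorem not_mem_bundle_of_optStrictPref (hirr : ¬ P d h h)
    (hpref : OptStrictPref P d (some h) (X d)) : d ∉ bundle X h := by
  intro hd
  rw [mem_bundle.mp hd] at hpref
  exact hirr hpref

theorem IsBlockingPair.exists_insert_sub_eq_one_and_optStrictPref (hv : IsMRF (v h))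
    {S : Finset (Fin m)} (hS : IsBlockingPair v P X h S) :
    ∃ d, v h (insert d (bundle X h)) - v h (bundle X h) = 1 ∧
      OptStrictPref P d (some h) (X d) := by
  obtain ⟨d, hd, hgain⟩ := hv.exists_mem_sdiff_insert_sub_eq_one hS.2.1
  obtain ⟨hdS, hdX⟩ := mem_sdiff.mp hd
  exact ⟨d, hgain, (hS.2.2 d hdS).resolve_left fun hXd => hdX (mem_bundle.mpr hXd)⟩

theorem isBlockingPair_insert (hX : NonRedundant v X) (hirr : ¬ P d h h)
    (hgain : v h (insert d (bundle X h)) - v h (bundle X h) = 1)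
    (hpref : OptStrictPref P d (some h) (X d)) :
    IsBlockingPair v P X h (insert d (bundle X h)) := by
  have hd := not_mem_bundle_of_optStrictPref hirr hpref
  refine ⟨?_, by linarith, ?_⟩
  · rw [card_insert_of_notMem hd, Nat.cast_succ, ← hX h]
    linarith
  · intro d' hd'
    rcases mem_insert.mp hd' with rfl | hd'
    · exact Or.inr hpref
    · exact Or.inl (mem_bundle.mp hd')

end Allocation

/-- Observation 2.3: for a non-redundant allocation `X`, a blocking pair exists iff
there are a doctor `d` and a hospital `h` with `Δ_h(X_h, d) = 1` and `h ≻_d X(d)`. -/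
theorem blocking_pair_iff {n m : ℕ} (v : Fin n → Finset (Fin m) → ℤ)
    (P : Fin m → Fin n → Fin n → Prop)
    (hv : ∀ h, IsMRF (v h)) (hP : ∀ d, IsStrictTotalOrder (Fin n) (P d))
    (X : Fin m → Option (Fin n)) (hX : NonRedundant v X) :
    (∃ h S, IsBlockingPair v P X h S) ↔
      ∃ (d : Fin m) (h : Fin n),
        v h (insert d (bundle X h)) - v h (bundle X h) = 1 ∧
        OptStrictPref P d (some h) (X d) := by
  constructor
  · rintro ⟨h, S, hS⟩
    obtain ⟨d, hd⟩ := hS.exists_insert_sub_eq_one_and_optStrictPref (hv h)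
    exact ⟨d, h, hd⟩
  · rintro ⟨d, h, hgain, hpref⟩
    exact ⟨h, _, isBlockingPair_insert hX ((hP d).irrefl h) hgain hpref⟩
end

section
/- When hospitals have matroid rank valuations and doctors have strict complete preference orders, every stable allocation X satisfies 2·USW(X) ≥ USW(Y) for every allocation Y; that is, every stable allocation is a 2-approximation to the maximum hospital utilitarian welfare. -/
open Finset

section Aux
variable {α : Type*} [DecidableEq α] {v : Finset α → ℤ}

lemma mrf_marg_nonneg (hv : IsMRF v) (S : Finset α) (d : α) (hd : d ∉ S) :
    0 ≤ v (insert d S) - v S := by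
  rcases hv.2.1 S d hd with h | h <;> omega

lemma mrf_mono_union (hv : IsMRF v) (S : Finset α) (A : Finset α) : v S ≤ v (S ∪ A) := by
  induction A using Finset.induction_on with
  | empty => simp
  | @insert a A ha ih =>
    rw [Finset.union_insert]
    by_cases haSA : a ∈ S ∪ A
    · rwa [Finset.insert_eq_self.mpr haSA]
    · have := mrf_marg_nonneg hv (S ∪ A) a haSA
      linarith

lemma mrf_mono (hv : IsMRF v) {S T : Finset α} (hST : S ⊆ T) : v S ≤ v T := by
  have := mrf_mono_union hv S T
  rwa [Finset.union_eq_right.mpr hST] at this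

lemma mrf_union_le (hv : IsMRF v) (S : Finset α) (A : Finset α) (hdisj : Disjoint S A) :
    v (S ∪ A) ≤ v S + ∑ d ∈ A, (v (insert d S) - v S) := by
  induction A using Finset.induction_on with
  | empty => simp
  | @insert a A ha ih =>
    have hdisjA : Disjoint S A :=
      hdisj.mono_right (Finset.subset_insert _ _)
    have haS : a ∉ S := Finset.disjoint_right.mp hdisj (Finset.mem_insert_self a A)
    have haSA : a ∉ S ∪ A := by simp [haS, ha]
    have key : v (insert a (S ∪ A)) - v (S ∪ A) ≤ v (insert a S) - v S :=
      hv.2.2 S (S ∪ A) a Finset.subset_union_left haSA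
    rw [Finset.union_insert, Finset.sum_insert ha]
    have := ih hdisjA
    linarith
end Aux

/-- Lemma 2.5: every stable allocation is a 2-approximation of the maximum hospital
utilitarian welfare. -/
theorem stable_two_approx_usw {n m : ℕ} (v : Fin n → Finset (Fin m) → ℤ)
    (P : Fin m → Fin n → Fin n → Prop)
    (hv : ∀ h, IsMRF (v h)) (hP : ∀ d, IsStrictTotalOrder (Fin n) (P d))
    (X : Fin m → Option (Fin n)) (hX : Stable v P X) :
    ∀ Y : Fin m → Option (Fin n), USW v Y ≤ 2 * USW v X := by
  intro Y
  obtain ⟨hNR, hNB⟩ := hX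
  -- stability claim: a doctor with positive marginal at h not assigned to h must be allocated
  have claim : ∀ (h : Fin n) (d : Fin m), X d ≠ some h →
      v h (insert d (bundle X h)) - v h (bundle X h) = 1 → X d ≠ none := by
    intro h d hxd hmarg hnone
    apply hNB
    refine ⟨h, insert d (bundle X h), ?_, ?_, ?_⟩
    · have hd : d ∉ bundle X h := by simp [bundle, hxd]
      rw [Finset.card_insert_of_notMem hd]
      have := hNR h
      push_cast
      linarith
    · linarith
    · intro d' hd'
      rcases Finset.mem_insert.mp hd' with rfl | hd'
      · right; rw [hnone]; exact trivial
      · left; exact (Finset.mem_filter.mp hd').2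
  -- per-hospital bound
  set T : Fin n → Finset (Fin m) := fun h =>
    (bundle Y h \ bundle X h).filter
      (fun d => v h (insert d (bundle X h)) - v h (bundle X h) = 1) with hT
  have perh : ∀ h : Fin n, v h (bundle Y h) ≤ v h (bundle X h) + ((T h).card : ℤ) := by
    intro h
    have hsub : bundle Y h ⊆ bundle X h ∪ (bundle Y h \ bundle X h) := by
      intro d hd
      by_cases hdx : d ∈ bundle X h
      · exact Finset.mem_union_left _ hdx
      · exact Finset.mem_union_right _ (Finset.mem_sdiff.mpr ⟨hd, hdx⟩)
    have h1 : v h (bundle Y h) ≤ v h (bundle X h ∪ (bundle Y h \ bundle X h)) :=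
      mrf_mono (hv h) hsub
    have h2 := mrf_union_le (hv h) (bundle X h) (bundle Y h \ bundle X h)
      (Finset.disjoint_sdiff)
    have h3 : ∑ d ∈ bundle Y h \ bundle X h,
        (v h (insert d (bundle X h)) - v h (bundle X h)) ≤ ((T h).card : ℤ) := by
      rw [hT]
      calc ∑ d ∈ bundle Y h \ bundle X h,
            (v h (insert d (bundle X h)) - v h (bundle X h))
          ≤ ∑ d ∈ bundle Y h \ bundle X h,
            (if v h (insert d (bundle X h)) - v h (bundle X h) = 1 then (1 : ℤ) else 0) := by
            apply Finset.sum_le_sum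
            intro d hd
            have hdX : d ∉ bundle X h := (Finset.mem_sdiff.mp hd).2
            rcases (hv h).2.1 (bundle X h) d hdX with h0 | h1
            · rw [h0]; split <;> norm_num
            · rw [h1]; simp
        _ = _ := by rw [Finset.sum_boole]
    linarith
  -- summing up
  have sum1 : USW v Y ≤ USW v X + ∑ h : Fin n, ((T h).card : ℤ) := by
    unfold USW
    rw [← Finset.sum_add_distrib]
    exact Finset.sum_le_sum (fun h _ => perh h)
  have hXcard : USW v X = ∑ h : Fin n, ((bundle X h).card : ℤ) := by
    unfold USW
    exact Finset.sum_congr rfl (fun h _ => hNR h)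
  -- the key cardinality bound
  have cardbound : ∑ h : Fin n, (T h).card ≤ ∑ h : Fin n, (bundle X h).card := by
    have hdT : ∀ h₁ ∈ (Finset.univ : Finset (Fin n)), ∀ h₂ ∈ Finset.univ, h₁ ≠ h₂ →
        Disjoint (T h₁) (T h₂) := by
      intro h₁ _ h₂ _ hne
      rw [Finset.disjoint_left]
      intro d hd₁ hd₂
      have e1 : Y d = some h₁ := (Finset.mem_filter.mp
        ((Finset.mem_sdiff.mp (Finset.mem_filter.mp hd₁).1).1)).2
      have e2 : Y d = some h₂ := (Finset.mem_filter.mp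
        ((Finset.mem_sdiff.mp (Finset.mem_filter.mp hd₂).1).1)).2
      rw [e1] at e2
      exact hne (Option.some_injective _ e2)
    have hdX : ∀ h₁ ∈ (Finset.univ : Finset (Fin n)), ∀ h₂ ∈ Finset.univ, h₁ ≠ h₂ →
        Disjoint (bundle X h₁) (bundle X h₂) := by
      intro h₁ _ h₂ _ hne
      rw [Finset.disjoint_left]
      intro d hd₁ hd₂
      have e1 : X d = some h₁ := (Finset.mem_filter.mp hd₁).2
      have e2 : X d = some h₂ := (Finset.mem_filter.mp hd₂).2
      exact hne (Option.some_injective _ (e1 ▸ e2))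
    rw [← Finset.card_biUnion hdT, ← Finset.card_biUnion hdX]
    apply Finset.card_le_card
    intro d hd
    obtain ⟨h, -, hdh⟩ := Finset.mem_biUnion.mp hd
    have hflt := Finset.mem_filter.mp hdh
    have hdX : d ∉ bundle X h := (Finset.mem_sdiff.mp hflt.1).2
    have hxd : X d ≠ some h := by
      intro hcon; exact hdX (Finset.mem_filter.mpr ⟨Finset.mem_univ d, hcon⟩)
    have hne : X d ≠ none := claim h d hxd hflt.2
    obtain ⟨h', hh'⟩ := Option.ne_none_iff_exists'.mp hne
    exact Finset.mem_biUnion.mpr ⟨h', Finset.mem_univ h',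
      Finset.mem_filter.mpr ⟨Finset.mem_univ d, hh'⟩⟩
  have cardbound' : ∑ h : Fin n, ((T h).card : ℤ) ≤ ∑ h : Fin n, ((bundle X h).card : ℤ) := by
    exact_mod_cast cardbound
  linarith [sum1, cardbound', hXcard.symm.le, hXcard.le]
end

section
/- Let H = {h_1, h_2} and D = {d_1, d_2, d_3}, with fixed doctor preferences d_1 : h_1 ≻ h_2, d_2 : h_2 ≻ h_1, d_3 : h_1 ≻ h_2. There is no function f mapping every pair (v_1, v_2) of matroid rank valuations on 2^D to an allocation such that both: (a) for all inputs, f(v_1, v_2) is stable and maximizes hospital utilitarian welfare with respect to the input valuations; and (b) f is hospital-strategyproof, i.e., for every hospital h ∈ {1,2}, all matroid rank valuations v_1, v_2, and every matroid rank valuation v', letting Y be the output of f when v_h is replaced by v' (the other valuation unchanged), one has v_h(Y_h) ≤ v_h(f(v_1,v_2)_h). -/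
open Finset

/-- The fixed doctor preferences of Example 2.7: doctors `0` and `2` prefer hospital `0`
to hospital `1`, doctor `1` prefers hospital `1` to hospital `0`. -/
def exPref (d : Fin 3) (h h' : Fin 2) : Prop :=
  (if d = 1 then h' else h) < (if d = 1 then h else h')

/-!
Under the truthful valuations (hospital `0` treats doctors `0` and `2` as substitutes,
hospital `1` doctors `0` and `1`) exactly two allocations are stable and welfare-maximal: one
hospital gets doctor `0`, the other doctors `1` and `2`. Whichever one the mechanism picks, the
hospital left with doctor `0` alone can declare doctor `0` worthless; the only admissible
outcome then gives it doctors `1` and `2`, worth `2` instead of `1` to it.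
-/

section PartitionRank

variable {α β : Type*} [DecidableEq α] [DecidableEq β]

/-- Rank function of the partition matroid with loops `L` and the fibres of `g` as parts of
capacity one. -/
def partitionRank (L : Finset α) (g : α → β) (S : Finset α) : ℤ :=
  ((S \ L).image g).card

theorem partitionRank_insert_sub (L : Finset α) (g : α → β) (S : Finset α) (d : α) :
    partitionRank L g (insert d S) - partitionRank L g S =
      if d ∉ L ∧ g d ∉ (S \ L).image g then 1 else 0 := by
  unfold partitionRank
  by_cases hL : d ∈ L
  · simp [insert_sdiff_of_mem S hL, hL]
  · rw [insert_sdiff_of_notMem S hL, image_insert, card_insert_eq_ite]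
    split_ifs <;> simp_all

theorem isMRF_partitionRank (L : Finset α) (g : α → β) : IsMRF (partitionRank L g) := by
  refine ⟨by simp [partitionRank], fun S d _ => ?_, fun S T d hST _ => ?_⟩
  · rw [partitionRank_insert_sub]
    split_ifs <;> simp
  · have hmono : (S \ L).image g ⊆ (T \ L).image g :=
      image_subset_image (sdiff_subset_sdiff hST le_rfl)
    rw [partitionRank_insert_sub, partitionRank_insert_sub]
    split_ifs with hT hS <;> try omega
    exact (hS ⟨hT.1, fun hgS => hT.2 (hmono hgS)⟩).elim

end PartitionRank

section Mechanisms

variable {n m : ℕ}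

def IsStableMaxUSW (P : Fin m → Fin n → Fin n → Prop) (v : Fin n → Finset (Fin m) → ℤ)
    (X : Fin m → Option (Fin n)) : Prop :=
  Stable v P X ∧ ∀ Y, USW v Y ≤ USW v X

theorem not_exists_strategyproof_of_manipulable (P : Fin m → Fin n → Fin n → Prop)
    (v : Fin n → Finset (Fin m) → ℤ) (hv : ∀ h, IsMRF (v h))
    (hman : ∀ X, IsStableMaxUSW P v X → ∃ h v', IsMRF v' ∧
      ∀ Y, IsStableMaxUSW P (Function.update v h v') Y → v h (bundle X h) < v h (bundle Y h)) :
    ¬ ∃ f : (Fin n → Finset (Fin m) → ℤ) → (Fin m → Option (Fin n)),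
      (∀ v : Fin n → Finset (Fin m) → ℤ, (∀ h, IsMRF (v h)) → IsStableMaxUSW P v (f v)) ∧
      (∀ (v : Fin n → Finset (Fin m) → ℤ) (h : Fin n) (v' : Finset (Fin m) → ℤ),
        (∀ g, IsMRF (v g)) → IsMRF v' →
        v h (bundle (f (Function.update v h v')) h) ≤ v h (bundle (f v) h)) := by
  rintro ⟨f, hf, hsp⟩
  obtain ⟨h, v', hv', hgain⟩ := hman (f v) (hf v hv)
  have hv_upd : ∀ g, IsMRF (Function.update v h v' g) := by
    intro g
    rcases eq_or_ne g h with rfl | hg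
    · simpa using hv'
    · simpa [hg] using hv g
  exact (hsp v h v' hv hv').not_gt (hgain _ (hf _ hv_upd))

instance {P : Fin m → Fin n → Fin n → Prop} [∀ d, DecidableRel (P d)] (d : Fin m) :
    DecidableRel (OptStrictPref P d)
  | some h, some h' => inferInstanceAs (Decidable (P d h h'))
  | some _, none => .isTrue trivial
  | none, _ => .isFalse id

instance {P : Fin m → Fin n → Fin n → Prop} [∀ d, DecidableRel (P d)]
    (v : Fin n → Finset (Fin m) → ℤ) (X : Fin m → Option (Fin n)) :
    Decidable (IsStableMaxUSW P v X) := by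
  unfold IsStableMaxUSW Stable NonRedundant IsBlockingPair
  infer_instance

end Mechanisms

section Example

instance (d : Fin 3) : DecidableRel (exPref d) := by
  unfold exPref
  infer_instance

def truthfulProfile : Fin 2 → Finset (Fin 3) → ℤ :=
  ![partitionRank ∅ ![0, 1, 0], partitionRank ∅ ![0, 0, 1]]

def misreport : Finset (Fin 3) → ℤ :=
  partitionRank {0} id

theorem isMRF_truthfulProfile (h : Fin 2) : IsMRF (truthfulProfile h) := by
  fin_cases h <;> exact isMRF_partitionRank _ _

def allocFirst : Fin 3 → Option (Fin 2) := ![some 0, some 1, some 1]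

def allocSecond : Fin 3 → Option (Fin 2) := ![some 1, some 0, some 0]

theorem isStableMaxUSW_truthfulProfile_iff (X : Fin 3 → Option (Fin 2)) :
    IsStableMaxUSW exPref truthfulProfile X ↔ X = allocFirst ∨ X = allocSecond := by
  revert X
  decide

theorem isStableMaxUSW_misreport_zero_iff (X : Fin 3 → Option (Fin 2)) :
    IsStableMaxUSW exPref (Function.update truthfulProfile 0 misreport) X ↔ X = allocSecond := by
  revert X
  decide

theorem isStableMaxUSW_misreport_one_iff (X : Fin 3 → Option (Fin 2)) :
    IsStableMaxUSW exPref (Function.update truthfulProfile 1 misreport) X ↔ X = allocFirst := by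
  revert X
  decide

end Example

/-- Example 2.7: with two hospitals, three doctors, and the fixed preferences `exPref`,
no mechanism that always outputs a stable, hospital-USW-maximizing allocation can be
hospital-strategyproof. -/
theorem no_sp_usw_mechanism :
    ¬ ∃ f : (Fin 2 → Finset (Fin 3) → ℤ) → (Fin 3 → Option (Fin 2)),
      (∀ v : Fin 2 → Finset (Fin 3) → ℤ, (∀ h, IsMRF (v h)) →
        Stable v exPref (f v) ∧ ∀ Y : Fin 3 → Option (Fin 2), USW v Y ≤ USW v (f v)) ∧
      (∀ (v : Fin 2 → Finset (Fin 3) → ℤ) (h : Fin 2) (v' : Finset (Fin 3) → ℤ),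
        (∀ g, IsMRF (v g)) → IsMRF v' →
        v h (bundle (f (Function.update v h v')) h) ≤ v h (bundle (f v) h)) := by
  refine not_exists_strategyproof_of_manipulable exPref truthfulProfile
    isMRF_truthfulProfile fun X hX => ?_
  rcases (isStableMaxUSW_truthfulProfile_iff X).mp hX with rfl | rfl
  · refine ⟨0, misreport, isMRF_partitionRank _ _, fun Y hY => ?_⟩
    rw [(isStableMaxUSW_misreport_zero_iff Y).mp hY]
    decide
  · refine ⟨1, misreport, isMRF_partitionRank _ _, fun Y hY => ?_⟩
    rw [(isStableMaxUSW_misreport_one_iff Y).mp hY]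
    decide
end

section
/- The HWSD-optimal allocation is doctor-strategyproof: fix matroid rank valuations for the hospitals and strict complete preference orders for the doctors, and let X be the HWSD-optimal allocation. For any doctor d_i and any alternative strict complete preference order ≻', let Y be the HWSD-optimal allocation for the profile in which d_i's order is replaced by ≻' (all else unchanged). Then X(d_i) is weakly preferred to Y(d_i) according to d_i's true order: either X(d_i) = Y(d_i) or X(d_i) ≻_{d_i} Y(d_i). -/
/-!
An HWSD-optimal allocation is the maximum of a fixed welfare-then-lexicographic order, so if `X`
is optimal for the true profile and `Y` for the misreported one, each beats the other in its own
order. Both comparisons are then decided at the first doctor on whom `X` and `Y` differ, who must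
rank `X` above `Y` truthfully and `Y` above `X` in the reported profile. Only the deviating doctor
has two different orders, so this doctor is `i`, and `i` truthfully prefers `X i` to `Y i`.
-/

open Finset

/-- The HWSD ordering on non-redundant allocations: `X` beats `Y`. -/
def HWSDgt {n m : ℕ} (v : Fin n → Finset (Fin m) → ℤ)
    (P : Fin m → Fin n → Fin n → Prop) (X Y : Fin m → Option (Fin n)) : Prop :=
  USW v Y < USW v X ∨
  (USW v X = USW v Y ∧ ∃ j : Fin m,
    OptStrictPref P j (X j) (Y j) ∧ ∀ k : Fin m, k < j → X k = Y k)

/-- `X` is the HWSD-optimal allocation: the greatest non-redundant allocation in the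
HWSD ordering (the output of the High Welfare Serial Dictatorship mechanism). -/
def IsHWSDOpt {n m : ℕ} (v : Fin n → Finset (Fin m) → ℤ)
    (P : Fin m → Fin n → Fin n → Prop) (X : Fin m → Option (Fin n)) : Prop :=
  NonRedundant v X ∧ ∀ Y, NonRedundant v Y → Y ≠ X → HWSDgt v P X Y

section

variable {n m : ℕ}

lemma OptStrictPref.irrefl {P : Fin m → Fin n → Fin n → Prop} {d : Fin m}
    (hP : ∀ x, ¬ P d x x) (a : Option (Fin n)) : ¬ OptStrictPref P d a a := by
  cases a with
  | none => exact id
  | some h => exact hP h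

lemma OptStrictPref.not_swap {P Q : Fin m → Fin n → Fin n → Prop} {d : Fin m}
    (hPQ : ∀ x y, P d x y → ¬ Q d y x) {a b : Option (Fin n)}
    (hab : OptStrictPref P d a b) : ¬ OptStrictPref Q d b a := by
  cases a with
  | none => exact hab.elim
  | some h =>
    cases b with
    | none => exact id
    | some h' => exact hPQ h h' hab

lemma HWSDgt.exists_common_witness {v : Fin n → Finset (Fin m) → ℤ}
    {P Q : Fin m → Fin n → Fin n → Prop} (hP : ∀ d x, ¬ P d x x)
    (hQ : ∀ d x, ¬ Q d x x) {X Y : Fin m → Option (Fin n)}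
    (hXY : HWSDgt v P X Y) (hYX : HWSDgt v Q Y X) :
    ∃ j, OptStrictPref P j (X j) (Y j) ∧ OptStrictPref Q j (Y j) (X j) := by
  rcases hXY with hlt | ⟨heq, j, hj, hbelow⟩
  · rcases hYX with hlt' | ⟨heq', -⟩ <;> omega
  rcases hYX with hlt' | ⟨-, j', hj', hbelow'⟩
  · omega
  rcases lt_trichotomy j j' with hlt | rfl | hlt
  · rw [hbelow' j hlt] at hj
    exact (OptStrictPref.irrefl (hP j) _ hj).elim
  · exact ⟨j, hj, hj'⟩
  · rw [hbelow j' hlt] at hj'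
    exact (OptStrictPref.irrefl (hQ j') _ hj').elim

end

theorem hwsd_doctor_sp_general {n m : ℕ} (v : Fin n → Finset (Fin m) → ℤ)
    (P : Fin m → Fin n → Fin n → Prop)
    (hP : ∀ d, IsStrictTotalOrder (Fin n) (P d))
    (i : Fin m) (P' : Fin n → Fin n → Prop) (hP' : IsStrictTotalOrder (Fin n) P')
    (X Y : Fin m → Option (Fin n))
    (hX : IsHWSDOpt v P X) (hY : IsHWSDOpt v (Function.update P i P') Y) :
    X i = Y i ∨ OptStrictPref P i (X i) (Y i) := by
  rcases eq_or_ne Y X with rfl | hne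
  · exact Or.inl rfl
  have irrefl_P : ∀ d x, ¬ P d x x := fun d => (hP d).irrefl
  have irrefl_P' : ∀ d x, ¬ Function.update P i P' d x x :=
    (Function.forall_update_iff P fun _ r => ∀ x, ¬ r x x).2 ⟨hP'.irrefl, fun d _ => irrefl_P d⟩
  obtain ⟨j, hXj, hYj⟩ :=
    (hX.2 Y hY.1 hne).exists_common_witness irrefl_P irrefl_P' (hY.2 X hX.1 hne.symm)
  rcases eq_or_ne j i with rfl | hji
  · exact Or.inr hXj
  refine (hXj.not_swap (fun x y hxy hyx => ?_) hYj).elim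
  rw [Function.update_of_ne hji] at hyx
  exact irrefl_P j x ((hP j).trans _ _ _ hxy hyx)

/-- The HWSD mechanism is doctor-strategyproof: no doctor can obtain a strictly
preferred hospital (according to its true order) by misreporting its preferences. -/
theorem hwsd_doctor_sp {n m : ℕ} (v : Fin n → Finset (Fin m) → ℤ)
    (P : Fin m → Fin n → Fin n → Prop)
    (hv : ∀ h, IsMRF (v h)) (hP : ∀ d, IsStrictTotalOrder (Fin n) (P d))
    (i : Fin m) (P' : Fin n → Fin n → Prop) (hP' : IsStrictTotalOrder (Fin n) P')
    (X Y : Fin m → Option (Fin n))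
    (hX : IsHWSDOpt v P X) (hY : IsHWSDOpt v (Function.update P i P') Y) :
    X i = Y i ∨ OptStrictPref P i (X i) (Y i) :=
  hwsd_doctor_sp_general v P hP i P' hP' X Y hX hY
end

section
/- For every profile of matroid rank hospital valuations and strict complete doctor preference orders, the allocation output by the serial dictatorship (SD) mechanism is stable. -/
/-! Serial dictatorship builds every bundle one doctor at a time, each with marginal gain `1`,
so bundles stay independent. If `(h, S)` blocked the outcome, then `v_h(X_h) < v_h(S)` and
the matroid exchange property yield a doctor `d ∈ S \ X_h` with marginal gain `1` at `X_h`;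
by submodularity `d` also had marginal gain `1` at the part of `X_h` built before `d`'s turn.
Since `d` prefers `h` to `X(d)`, serial dictatorship would have sent `d` to `h` (or to a
hospital `d` likes even more), a contradiction. -/

open Finset

/-- The doctors (strictly) before `i` assigned to hospital `h` under `X`:
the partial bundle of `h` at the start of doctor `i`'s turn in serial dictatorship. -/
def bundleBefore {n m : ℕ} (X : Fin m → Option (Fin n)) (h : Fin n) (i : Fin m) :
    Finset (Fin m) :=
  Finset.univ.filter (fun d => X d = some h ∧ d < i)

/-- `X` is the output of the serial dictatorship mechanism: processing doctors in
order, each doctor `i` is assigned to the first hospital (in `i`'s reported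
preference order `P i`) whose marginal gain for `i`, given its current partial
bundle, is `1`; `i` stays unallocated if no such hospital exists. -/
def IsSDOutput {n m : ℕ} (v : Fin n → Finset (Fin m) → ℤ)
    (P : Fin m → Fin n → Fin n → Prop) (X : Fin m → Option (Fin n)) : Prop :=
  ∀ i : Fin m,
    (∀ h, X i = some h →
      (v h (insert i (bundleBefore X h i)) - v h (bundleBefore X h i) = 1 ∧
       ∀ h', P i h' h →
         v h' (insert i (bundleBefore X h' i)) - v h' (bundleBefore X h' i) = 0)) ∧
    (X i = none → ∀ h,
      v h (insert i (bundleBefore X h i)) - v h (bundleBefore X h i) = 0)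

namespace IsMRF

variable {α : Type*} [DecidableEq α] {v : Finset α → ℤ}

lemma marginal_nonneg (hv : IsMRF v) {S : Finset α} {d : α} (hd : d ∉ S) :
    0 ≤ v (insert d S) - v S := by
  rcases hv.2.1 S d hd with h | h <;> omega

lemma le_union (hv : IsMRF v) (B A : Finset α) : v B ≤ v (B ∪ A) := by
  induction A using Finset.induction_on with
  | empty => simp
  | insert a A _ ih =>
    rw [union_insert]
    by_cases ha : a ∈ B ∪ A
    · rwa [insert_eq_of_mem ha]
    · have := hv.marginal_nonneg ha
      omega

lemma marginal_eq_one_of_subset (hv : IsMRF v) {S T : Finset α} {d : α} (hST : S ⊆ T)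
    (hd : d ∉ T) (h1 : v (insert d T) - v T = 1) : v (insert d S) - v S = 1 := by
  have := hv.2.2 S T d hST hd
  rcases hv.2.1 S d (fun h => hd (hST h)) with h | h <;> omega

/-- The augmentation property of matroids, phrased through the rank function. -/
lemma exists_marginal_eq_one (hv : IsMRF v) (A : Finset α) :
    ∀ B : Finset α, v B < v (B ∪ A) → ∃ d ∈ A, d ∉ B ∧ v (insert d B) - v B = 1 := by
  induction A using Finset.induction_on with
  | empty => simp
  | insert a A _ ih =>
    intro B hB
    by_cases hA : v B < v (B ∪ A)
    · obtain ⟨d, hd, hdB, h1⟩ := ih B hA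
      exact ⟨d, mem_insert_of_mem hd, hdB, h1⟩
    · rw [union_insert] at hB
      have haBA : a ∉ B ∪ A := fun ha => by rw [insert_eq_of_mem ha] at hB; omega
      have h1 : v (insert a (B ∪ A)) - v (B ∪ A) = 1 := by
        have := hv.le_union B A
        rcases hv.2.1 _ a haBA with h | h <;> omega
      exact ⟨a, mem_insert_self a A, fun ha => haBA (mem_union_left A ha),
        hv.marginal_eq_one_of_subset subset_union_left haBA h1⟩

end IsMRF

lemma eq_card_of_marginal_eq_one {α : Type*} [LinearOrder α] {v : Finset α → ℤ}
    (h0 : v ∅ = 0) (S : Finset α)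
    (hS : ∀ i ∈ S, v (insert i (S.filter (· < i))) - v (S.filter (· < i)) = 1) :
    v S = S.card := by
  induction S using Finset.induction_on_max with
  | empty => simp [h0]
  | insert a s hlt ih =>
    have has : a ∉ s := fun ha => lt_irrefl a (hlt a ha)
    have hfilter_a : (insert a s).filter (· < a) = s := by
      rw [filter_insert, if_neg (lt_irrefl a), filter_true_of_mem hlt]
    have hfilter_s : ∀ i ∈ s, (insert a s).filter (· < i) = s.filter (· < i) := fun i hi => by
      rw [filter_insert, if_neg (lt_asymm (hlt i hi))]
    have hs : v s = s.card :=
      ih fun i hi => hfilter_s i hi ▸ hS i (mem_insert_of_mem hi)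
    have ha := hS a (mem_insert_self a s)
    rw [hfilter_a] at ha
    rw [card_insert_of_notMem has]
    push_cast
    omega

section SerialDictatorship

variable {n m : ℕ}

lemma bundleBefore_eq_filter (X : Fin m → Option (Fin n)) (h : Fin n) (i : Fin m) :
    bundleBefore X h i = (bundle X h).filter (· < i) := by
  ext d
  simp [bundleBefore, bundle]

lemma bundleBefore_subset_bundle (X : Fin m → Option (Fin n)) (h : Fin n) (i : Fin m) :
    bundleBefore X h i ⊆ bundle X h := by
  rw [bundleBefore_eq_filter]
  exact filter_subset _ _

variable {v : Fin n → Finset (Fin m) → ℤ} {P : Fin m → Fin n → Fin n → Prop}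
  {X : Fin m → Option (Fin n)}

lemma IsSDOutput.nonRedundant (hv : ∀ h, IsMRF (v h)) (hX : IsSDOutput v P X) :
    NonRedundant v X := by
  intro h
  refine eq_card_of_marginal_eq_one (hv h).1 _ fun i hi => ?_
  rw [← bundleBefore_eq_filter]
  exact ((hX i).1 h (by simpa [bundle] using hi)).1

lemma IsSDOutput.marginal_eq_zero_of_prefers (hX : IsSDOutput v P X) {d : Fin m} {h : Fin n}
    (hpref : OptStrictPref P d (some h) (X d)) :
    v h (insert d (bundleBefore X h d)) - v h (bundleBefore X h d) = 0 := by
  cases hXd : X d with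
  | none => exact (hX d).2 hXd h
  | some h' =>
    rw [hXd] at hpref
    exact ((hX d).1 h' hXd).2 h hpref

lemma IsSDOutput.not_isBlockingPair (hv : ∀ h, IsMRF (v h)) (hX : IsSDOutput v P X)
    (h : Fin n) (S : Finset (Fin m)) : ¬ IsBlockingPair v P X h S := by
  rintro ⟨-, hlt, hS⟩
  have hgain : v h (bundle X h) < v h (bundle X h ∪ S) := by
    have := (hv h).le_union S (bundle X h)
    rw [union_comm] at this
    omega
  obtain ⟨d, hdS, hdX, h1⟩ := (hv h).exists_marginal_eq_one S (bundle X h) hgain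
  have hXd : X d ≠ some h := fun hd => hdX (by simpa [bundle] using hd)
  have h1_before := (hv h).marginal_eq_one_of_subset (bundleBefore_subset_bundle X h d) hdX h1
  have h0_before := hX.marginal_eq_zero_of_prefers ((hS d hdS).resolve_left hXd)
  omega

end SerialDictatorship

theorem sd_stable_general {n m : ℕ} (v : Fin n → Finset (Fin m) → ℤ)
    (P : Fin m → Fin n → Fin n → Prop)
    (hv : ∀ h, IsMRF (v h))
    (X : Fin m → Option (Fin n)) (hX : IsSDOutput v P X) :
    Stable v P X :=
  ⟨hX.nonRedundant hv, fun ⟨h, S, hblock⟩ => hX.not_isBlockingPair hv h S hblock⟩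

/-- The allocation output by the serial dictatorship mechanism is stable. -/
theorem sd_stable {n m : ℕ} (v : Fin n → Finset (Fin m) → ℤ)
    (P : Fin m → Fin n → Fin n → Prop)
    (hv : ∀ h, IsMRF (v h)) (hP : ∀ d, IsStrictTotalOrder (Fin n) (P d))
    (X : Fin m → Option (Fin n)) (hX : IsSDOutput v P X) :
    Stable v P X :=
  sd_stable_general v P hv X hX
end
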